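/- arXiv:1009.2522 — 3 statements merged into one kernel-verified Lean document; each statement's English description precedes it below -/
import Mathlib

section
/- Let f_Y be a Lebesgue probability density on ℝ with characteristic function φ_Y(ω) = ∫ e^{iωy} f_Y(y) dy, and let f_ε be a Lebesgue probability density with characteristic function φ_ε. Then for any ω, μ ∈ ℝ with φ_ε(ω) ≠ 0 and φ_ε(μ) ≠ 0, and any x₀ ∈ ℝ, one has the exact identity |φ_ε(ω)|² |φ_ε(μ)|² ∫_{−∞}^∞ Im{ e^{iω(y−x₀)}/φ_ε(ω) } · Im{ e^{iμ(y−x₀)}/φ_ε(μ) } f_Y(y) dy = (1/2) Re{ conj(φ_ε(ω)) · [ φ_ε(μ) φ_Y(ω−μ) e^{−i(ω−μ)x₀} − conj(φ_ε(μ)) φ_Y(ω+μ) e^{−i(ω+μ)x₀} ] }, where conj denotes complex conjugation. -/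
/-! Since `‖a‖² Im(u / a) = Im(conj a · u)` and `Im u · Im v = Re(u conj v − u v) / 2`, the weighted
integrand is the real part of a combination of `e^{i(ω−μ)(y−x₀)} f_Y(y)` and
`e^{i(ω+μ)(y−x₀)} f_Y(y)`; integrating these term by term gives `φ_Y(ω−μ)` and `φ_Y(ω+μ)`. -/

open MeasureTheory

/-- The characteristic function of a Lebesgue probability density `f` on `ℝ`:
`φ(ω) = ∫ e^{iωy} f(y) dy`. -/
noncomputable def charFunD (f : ℝ → ℝ) (ω : ℝ) : ℂ :=
  ∫ y : ℝ, Complex.exp (Complex.I * ω * y) * (f y : ℂ)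

open Complex ComplexConjugate

namespace Complex

lemma sq_norm_mul_im_div (z w : ℂ) : ‖z‖ ^ 2 * (w / z).im = (conj z * w).im := by
  rcases eq_or_ne z 0 with rfl | hz
  · simp
  have : normSq z ≠ 0 := normSq_eq_zero.not.mpr hz
  rw [div_im, Complex.sq_norm, mul_im, conj_re, conj_im]
  field_simp
  ring

lemma im_mul_im (z w : ℂ) : z.im * w.im = (z * conj w - z * w).re / 2 := by
  simp only [sub_re, mul_re, conj_re, conj_im]
  ring

lemma sq_norm_mul_sq_norm_mul_im_div_mul_im_div (a b u v : ℂ) :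
    ‖a‖ ^ 2 * ‖b‖ ^ 2 * ((u / a).im * (v / b).im) =
      (conj a * b * (u * conj v) - conj a * conj b * (u * v)).re / 2 := by
  rw [mul_mul_mul_comm, sq_norm_mul_im_div, sq_norm_mul_im_div, im_mul_im]
  congr 2
  simp only [map_mul, conj_conj]
  ring

end Complex

lemma integrable_cexp_I_mul_sub_mul {f : ℝ → ℝ} (hf : Integrable f) (s x₀ : ℝ) :
    Integrable fun y : ℝ ↦ exp (I * s * (y - x₀)) * (f y : ℂ) := by
  refine hf.ofReal.bdd_mul (c := 1) (by fun_prop) (.of_forall fun y ↦ ?_)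
  simp [norm_exp]

lemma integral_cexp_I_mul_sub_mul (f : ℝ → ℝ) (s x₀ : ℝ) :
    ∫ y : ℝ, exp (I * s * (y - x₀)) * (f y : ℂ) = charFunD f s * exp (-(I * s * x₀)) := by
  rw [charFunD, ← integral_mul_const]
  congr 1 with y
  rw [mul_right_comm _ (f y : ℂ), ← Complex.exp_add]
  ring_nf

theorem image_product_integral_identity_general (fY fε : ℝ → ℝ)
    (hfY1 : ∫ y, fY y = 1)
    (ω μ x₀ : ℝ) :
    (‖charFunD fε ω‖) ^ 2 * (‖charFunD fε μ‖) ^ 2 *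
        ∫ y : ℝ, (Complex.exp (Complex.I * ω * (y - x₀)) / charFunD fε ω).im *
          (Complex.exp (Complex.I * μ * (y - x₀)) / charFunD fε μ).im * fY y =
      (1/2) * ((starRingEnd ℂ) (charFunD fε ω) *
        (charFunD fε μ * charFunD fY (ω - μ) * Complex.exp (-(Complex.I * (ω - μ) * x₀)) -
          (starRingEnd ℂ) (charFunD fε μ) * charFunD fY (ω + μ) *
            Complex.exp (-(Complex.I * (ω + μ) * x₀)))).re := by
  have hfY : Integrable fY := .of_integral_ne_zero (by simp [hfY1])
  set a := charFunD fε ω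
  set b := charFunD fε μ
  set F : ℝ → ℂ := fun y ↦ conj a * b * (exp (I * (ω - μ : ℝ) * (y - x₀)) * fY y) -
    conj a * conj b * (exp (I * (ω + μ : ℝ) * (y - x₀)) * fY y) with hF
  have hint (s : ℝ) := integrable_cexp_I_mul_sub_mul hfY s x₀
  have hFint : Integrable F := ((hint _).const_mul _).sub ((hint _).const_mul _)
  have hpoint (y : ℝ) : ‖a‖ ^ 2 * ‖b‖ ^ 2 * ((exp (I * ω * (y - x₀)) / a).im *
      (exp (I * μ * (y - x₀)) / b).im * fY y) = (F y).re / 2 := by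
    rw [← mul_assoc, sq_norm_mul_sq_norm_mul_im_div_mul_im_div, ← exp_conj, ← exp_add, ← exp_add]
    simp only [hF, map_mul, map_sub, conj_I, conj_ofReal, div_mul_eq_mul_div, ← re_mul_ofReal]
    push_cast
    ring_nf
  have hFintegral : ∫ y, F y = conj a * (b * charFunD fY (ω - μ) * exp (-(I * (ω - μ) * x₀)) -
      conj b * charFunD fY (ω + μ) * exp (-(I * (ω + μ) * x₀))) := by
    rw [hF, integral_sub ((hint _).const_mul _) ((hint _).const_mul _), integral_const_mul,
      integral_const_mul, integral_cexp_I_mul_sub_mul, integral_cexp_I_mul_sub_mul]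
    push_cast
    ring
  rw [← integral_const_mul, integral_congr_ae (.of_forall hpoint), integral_div,
    show ∫ y, (F y).re = (∫ y, F y).re from integral_re hFint, hFintegral]
  ring

/-- the exact identity
`|φ_ε(ω)|²|φ_ε(μ)|² ∫ Im{e^{iω(y−x₀)}/φ_ε(ω)} Im{e^{iμ(y−x₀)}/φ_ε(μ)} f_Y(y) dy
 = (1/2) Re{ conj(φ_ε(ω)) [ φ_ε(μ) φ_Y(ω−μ) e^{−i(ω−μ)x₀}
     − conj(φ_ε(μ)) φ_Y(ω+μ) e^{−i(ω+μ)x₀} ] }`. -/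
theorem image_product_integral_identity (fY fε : ℝ → ℝ)
    (hfYm : Measurable fY) (hfY0 : ∀ y, 0 ≤ fY y) (hfY1 : ∫ y, fY y = 1)
    (hfεm : Measurable fε) (hfε0 : ∀ u, 0 ≤ fε u) (hfε1 : ∫ u, fε u = 1)
    (ω μ x₀ : ℝ) (hω : charFunD fε ω ≠ 0) (hμ : charFunD fε μ ≠ 0) :
    (‖charFunD fε ω‖) ^ 2 * (‖charFunD fε μ‖) ^ 2 *
        ∫ y : ℝ, (Complex.exp (Complex.I * ω * (y - x₀)) / charFunD fε ω).im *
          (Complex.exp (Complex.I * μ * (y - x₀)) / charFunD fε μ).im * fY y =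
      (1/2) * ((starRingEnd ℂ) (charFunD fε ω) *
        (charFunD fε μ * charFunD fY (ω - μ) * Complex.exp (-(Complex.I * (ω - μ) * x₀)) -
          (starRingEnd ℂ) (charFunD fε μ) * charFunD fY (ω + μ) *
            Complex.exp (-(Complex.I * (ω + μ) * x₀)))).re :=
  image_product_integral_identity_general fY fε hfY1 ω μ x₀
end

section
/- Let φ be the characteristic function of a probability density on ℝ (so |φ(ω)| ≤ 1 for all ω) satisfying |φ(ω)| ≥ 1 − b|ω|^τ for all |ω| ≤ ω₀, with constants ω₀, b, τ > 0. Then for every w with 0 < w ≤ ω₀ and 2b w^τ < 1, 0 ≤ ∫₀^w ( |φ(ω)|^{−2} − 1 ) ω^{−1} dω ≤ Σ_{k=1}^∞ (2b w^τ)^k/(τk) = −ln(1 − 2b w^τ)/τ. -/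
/-!
For `0 < ω ≤ w` we have `|φ(ω)|² ≥ (1 - b ω^τ)² ≥ 1 - 2b ω^τ > 0`, so the integrand
`(|φ(ω)|⁻² - 1) / ω` lies between `0` and `((1 - 2b ω^τ)⁻¹ - 1) / ω`, which is exactly the
derivative of `-log (1 - 2b ω^τ) / τ`. Integrating over `[0, w]` gives the bound; the integrand
is integrable because it is dominated by a nonnegative derivative. The series is the Taylor
series of `-log (1 - x)` at `x = 2b w^τ`.
-/

open MeasureTheory

open Set Real

theorem integral_le_sub_of_nonneg_of_le_hasDerivAt {F H H' : ℝ → ℝ} {a b : ℝ} (hab : a ≤ b)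
    (hF : AEStronglyMeasurable F (volume.restrict (Ioo a b))) (hH : ContinuousOn H (Icc a b))
    (hderiv : ∀ x ∈ Ioo a b, HasDerivAt H (H' x) x) (hF0 : ∀ x ∈ Ioo a b, 0 ≤ F x)
    (hFH : ∀ x ∈ Ioo a b, F x ≤ H' x) :
    ∫ x in a..b, F x ≤ H b - H a := by
  have hH'int : IntegrableOn H' (Ioo a b) :=
    (intervalIntegral.integrableOn_deriv_of_nonneg hH hderiv fun x hx =>
      (hF0 x hx).trans (hFH x hx)).mono_set Ioo_subset_Ioc_self
  have hFint : IntegrableOn F (Ioo a b) :=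
    hH'int.mono' hF <| ae_restrict_of_forall_mem measurableSet_Ioo fun x hx => by
      rw [Real.norm_of_nonneg (hF0 x hx)]
      exact hFH x hx
  exact intervalIntegral.integral_le_sub_of_hasDeriv_right_of_le hab hH
    (fun x hx => (hderiv x hx).hasDerivWithinAt)
    ((integrableOn_Icc_iff_integrableOn_Ioo).mpr hFint) hFH

theorem hasSum_pow_succ_div_mul_succ {x : ℝ} (hx : |x| < 1) (τ : ℝ) :
    HasSum (fun k : ℕ => x ^ (k + 1) / (τ * (k + 1))) (-log (1 - x) / τ) := by
  simpa only [div_div, mul_comm] using (hasSum_pow_div_log_of_abs_lt_one hx).div_const τ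

theorem one_sub_mul_rpow_pos {c τ w ω : ℝ} (hc : 0 ≤ c) (hτ : 0 ≤ τ) (hω : ω ∈ Icc 0 w)
    (hcw : c * w ^ τ < 1) : 0 < 1 - c * ω ^ τ := by
  have : c * ω ^ τ ≤ c * w ^ τ := by gcongr; exacts [hω.1, hω.2]
  linarith

theorem hasDerivAt_neg_log_one_sub_mul_rpow_div {c τ ω : ℝ} (hτ : τ ≠ 0) (hω : 0 < ω)
    (h : c * ω ^ τ < 1) :
    HasDerivAt (fun ω => -log (1 - c * ω ^ τ) / τ) (((1 - c * ω ^ τ)⁻¹ - 1) / ω) ω := by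
  have hpow : HasDerivAt (fun ω : ℝ => ω ^ τ) (τ * ω ^ (τ - 1)) ω :=
    hasDerivAt_rpow_const (Or.inl hω.ne')
  refine ((((hpow.const_mul c).const_sub 1).log (by linarith)).neg.div_const τ).congr_deriv ?_
  have : 1 - c * ω ^ τ ≠ 0 := by linarith
  rw [rpow_sub_one hω.ne']
  field_simp
  ring

theorem continuousOn_neg_log_one_sub_mul_rpow_div {c τ w : ℝ} (hc : 0 ≤ c) (hτ : 0 < τ)
    (hcw : c * w ^ τ < 1) :
    ContinuousOn (fun ω => -log (1 - c * ω ^ τ) / τ) (Icc 0 w) := by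
  refine fun ω hω => ContinuousAt.continuousWithinAt ?_
  exact (((continuousAt_rpow_const ω τ (Or.inr hτ.le)).const_mul c).const_sub 1
    |>.log (one_sub_mul_rpow_pos hc hτ.le hω hcw).ne').neg.div_const τ

theorem inv_sub_one_div_nonneg {s ω : ℝ} (hs0 : 0 < s) (hs1 : s ≤ 1) (hω : 0 ≤ ω) :
    0 ≤ (s⁻¹ - 1) / ω :=
  div_nonneg (sub_nonneg.2 ((one_le_inv₀ hs0).2 hs1)) hω

theorem integral_inv_sub_one_div_nonneg {s : ℝ → ℝ} {w : ℝ} (hw : 0 ≤ w)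
    (hs : ∀ ω ∈ Icc 0 w, 0 < s ω ∧ s ω ≤ 1) : 0 ≤ ∫ ω in 0..w, ((s ω)⁻¹ - 1) / ω :=
  intervalIntegral.integral_nonneg hw fun ω hω =>
    inv_sub_one_div_nonneg (hs ω hω).1 (hs ω hω).2 hω.1

theorem integral_inv_sub_one_div_le_neg_log {s : ℝ → ℝ} {c τ w : ℝ} (hs : Measurable s)
    (hc : 0 ≤ c) (hτ : 0 < τ) (hw : 0 ≤ w) (hcw : c * w ^ τ < 1)
    (hs_ge : ∀ ω ∈ Icc 0 w, 1 - c * ω ^ τ ≤ s ω) (hs_le : ∀ ω ∈ Icc 0 w, s ω ≤ 1) :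
    ∫ ω in 0..w, ((s ω)⁻¹ - 1) / ω ≤ -log (1 - c * w ^ τ) / τ := by
  have hpos : ∀ ω ∈ Ioo 0 w, 0 < 1 - c * ω ^ τ := fun ω hω =>
    one_sub_mul_rpow_pos hc hτ.le (Ioo_subset_Icc_self hω) hcw
  have hmeas : Measurable fun ω => ((s ω)⁻¹ - 1) / ω :=
    (hs.inv.sub measurable_const).div measurable_id
  have hderiv : ∀ ω ∈ Ioo 0 w, HasDerivAt (fun ω => -log (1 - c * ω ^ τ) / τ)
      (((1 - c * ω ^ τ)⁻¹ - 1) / ω) ω := fun ω hω =>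
    hasDerivAt_neg_log_one_sub_mul_rpow_div hτ.ne' hω.1 (sub_pos.1 (hpos ω hω))
  have hnonneg : ∀ ω ∈ Ioo 0 w, 0 ≤ ((s ω)⁻¹ - 1) / ω := fun ω hω =>
    inv_sub_one_div_nonneg ((hpos ω hω).trans_le (hs_ge ω (Ioo_subset_Icc_self hω)))
      (hs_le ω (Ioo_subset_Icc_self hω)) hω.1.le
  have hle : ∀ ω ∈ Ioo 0 w, ((s ω)⁻¹ - 1) / ω ≤ ((1 - c * ω ^ τ)⁻¹ - 1) / ω := fun ω hω => by
    have := hpos ω hω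
    have := hs_ge ω (Ioo_subset_Icc_self hω)
    gcongr
    exact hω.1.le
  simpa [zero_rpow hτ.ne'] using integral_le_sub_of_nonneg_of_le_hasDerivAt hw
    hmeas.aestronglyMeasurable (continuousOn_neg_log_one_sub_mul_rpow_div hc hτ hcw) hderiv
    hnonneg hle

theorem continuous_charFunD {f : ℝ → ℝ} (hf : Integrable f) : Continuous (charFunD f) := by
  have hexp : ∀ ω : ℝ, Continuous fun y : ℝ => Complex.exp (Complex.I * ω * y) := fun ω => by
    fun_prop
  refine continuous_of_dominated (bound := fun y => ‖f y‖) (fun ω => ?_) (fun ω => ?_) hf.norm ?_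
  · exact (hexp ω).aestronglyMeasurable.mul
      (Complex.continuous_ofReal.comp_aestronglyMeasurable hf.aestronglyMeasurable)
  · refine Filter.Eventually.of_forall fun y => ?_
    simp [Complex.norm_exp]
  · exact Filter.Eventually.of_forall fun y => by fun_prop

theorem norm_charFunD_le_one {f : ℝ → ℝ} (hf0 : ∀ y, 0 ≤ f y) (hf1 : ∫ y, f y = 1) (ω : ℝ) :
    ‖charFunD f ω‖ ≤ 1 := by
  calc ‖charFunD f ω‖ ≤ ∫ y : ℝ, ‖Complex.exp (Complex.I * ω * y) * (f y : ℂ)‖ :=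
        norm_integral_le_integral_norm _
    _ = ∫ y, f y := by
        refine integral_congr_ae (Filter.Eventually.of_forall fun y => ?_)
        simp [Complex.norm_exp, abs_of_nonneg (hf0 y)]
    _ = 1 := hf1

theorem one_sub_two_mul_le_sq {a r : ℝ} (h : 1 - a ≤ r) : 1 - 2 * a ≤ r ^ 2 := by
  rcases le_total 0 (1 - a) with ha | ha
  · nlinarith [pow_le_pow_left₀ ha h 2, sq_nonneg a]
  · nlinarith

theorem remainder_integral_bound_general (f : ℝ → ℝ)
    (hf0 : ∀ y, 0 ≤ f y) (hf1 : ∫ y, f y = 1)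
    (ω₀ b τ : ℝ) (hb : 0 < b) (hτ : 0 < τ)
    (hA2 : ∀ ω : ℝ, |ω| ≤ ω₀ → 1 - b * |ω| ^ τ ≤ ‖charFunD f ω‖)
    (w : ℝ) (hw0 : 0 < w) (hw : w ≤ ω₀) (hw1 : 2 * b * w ^ τ < 1) :
    0 ≤ ∫ ω in (0:ℝ)..w, (((‖charFunD f ω‖) ^ 2)⁻¹ - 1) / ω ∧
    (∫ ω in (0:ℝ)..w, (((‖charFunD f ω‖) ^ 2)⁻¹ - 1) / ω) ≤
      ∑' k : ℕ, (2 * b * w ^ τ) ^ (k + 1) / (τ * (k + 1)) ∧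
    (∑' k : ℕ, (2 * b * w ^ τ) ^ (k + 1) / (τ * (k + 1))) =
      -Real.log (1 - 2 * b * w ^ τ) / τ := by
  have hfi : Integrable f := .of_integral_ne_zero (by rw [hf1]; exact one_ne_zero)
  have h2b : 0 ≤ 2 * b := by positivity
  have hs_ge : ∀ ω ∈ Icc 0 w, 1 - 2 * b * ω ^ τ ≤ ‖charFunD f ω‖ ^ 2 := fun ω hω => by
    have h := hA2 ω (by rw [abs_of_nonneg hω.1]; exact hω.2.trans hw)
    rw [abs_of_nonneg hω.1] at h
    simpa only [mul_assoc] using one_sub_two_mul_le_sq h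
  have hs_le : ∀ ω, ‖charFunD f ω‖ ^ 2 ≤ 1 := fun ω =>
    pow_le_one₀ (norm_nonneg _) (norm_charFunD_le_one hf0 hf1 ω)
  have hsum := hasSum_pow_succ_div_mul_succ
    (abs_lt.2 ⟨by linarith [mul_nonneg h2b (rpow_nonneg hw0.le τ)], hw1⟩) τ
  refine ⟨integral_inv_sub_one_div_nonneg hw0.le fun ω hω =>
      ⟨(one_sub_mul_rpow_pos h2b hτ.le hω hw1).trans_le (hs_ge ω hω), hs_le ω⟩, ?_, hsum.tsum_eq⟩
  rw [hsum.tsum_eq]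
  exact integral_inv_sub_one_div_le_neg_log ((continuous_charFunD hfi).norm.pow 2).measurable
    h2b hτ hw0.le hw1 hs_ge fun ω _ => hs_le ω

/-- for the characteristic function `φ` of a probability density satisfying
`|φ(ω)| ≥ 1 − b|ω|^τ` for `|ω| ≤ ω₀`, and `0 < w ≤ ω₀` with `2b w^τ < 1`,
`0 ≤ ∫₀^w (|φ(ω)|^{−2} − 1) ω^{−1} dω ≤ Σ_{k≥1} (2b w^τ)^k/(τk) = −ln(1 − 2b w^τ)/τ`. -/
theorem remainder_integral_bound (f : ℝ → ℝ)
    (hfm : Measurable f) (hf0 : ∀ y, 0 ≤ f y) (hf1 : ∫ y, f y = 1)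
    (ω₀ b τ : ℝ) (hω₀ : 0 < ω₀) (hb : 0 < b) (hτ : 0 < τ)
    (hA2 : ∀ ω : ℝ, |ω| ≤ ω₀ → 1 - b * |ω| ^ τ ≤ ‖charFunD f ω‖)
    (w : ℝ) (hw0 : 0 < w) (hw : w ≤ ω₀) (hw1 : 2 * b * w ^ τ < 1) :
    0 ≤ ∫ ω in (0:ℝ)..w, (((‖charFunD f ω‖) ^ 2)⁻¹ - 1) / ω ∧
    (∫ ω in (0:ℝ)..w, (((‖charFunD f ω‖) ^ 2)⁻¹ - 1) / ω) ≤
      ∑' k : ℕ, (2 * b * w ^ τ) ^ (k + 1) / (τ * (k + 1)) ∧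
    (∑' k : ℕ, (2 * b * w ^ τ) ^ (k + 1) / (τ * (k + 1))) =
      -Real.log (1 - 2 * b * w ^ τ) / τ :=
  remainder_integral_bound_general f hf0 hf1 ω₀ b τ hb hτ hA2 w hw0 hw hw1
end

section
/- For every x ≥ 0 and every c ∈ ℝ, | ∫₀^x sin(cω)/ω dω | ≤ 2; more precisely, the supremum over x > 0 of ∫₀^x (sin t)/t dt is strictly less than 1.85195, and the left-hand side above never exceeds this supremum. -/
/-!
Write `Si x = ∫₀ˣ sin t / t`. The substitution `u = c t` turns `∫₀ˣ sin (c t) / t` into `Si (c x)`,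
and `Si` is odd, so everything reduces to showing `|Si| ≤ Si π`. On `[0, π]` the integrand is
nonnegative, so `0 ≤ Si x ≤ Si π` there. For `x ≥ π`, integrating by parts gives
`∫_π^x sin t / t = -1/π - cos x / x - ∫_π^x cos t / t²`, which lies in `[-2/π, 0]`;
since `Si π ≥ ∫₀^π sin t / π = 2/π`, again `0 ≤ Si x ≤ Si π`. Hence the supremum is `Si π`.
Finally `sin t` is bounded above by its Taylor polynomial of degree `13` on `[0, π]` (alternating
series), and integrating that polynomial divided by `t` gives `Si π < 1.85195`.
-/

open MeasureTheory intervalIntegral Set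
open scoped Nat

namespace Real

/-- At `t = 0` the integrand is the junk value `sin 0 / 0 = 0` instead of the continuous value `1`;
a single point does not change the integral. -/
noncomputable def sineIntegral (x : ℝ) : ℝ := ∫ t in (0 : ℝ)..x, sin t / t

lemma intervalIntegrable_sin_div (a b : ℝ) :
    IntervalIntegrable (fun t => sin t / t) volume a b := by
  refine IntervalIntegrable.mono_fun' (g := fun _ => 1) intervalIntegrable_const
    (measurable_sin.div measurable_id).aestronglyMeasurable
    (Filter.Eventually.of_forall fun t => ?_)
  show ‖sin t / t‖ ≤ 1
  rcases eq_or_ne t 0 with rfl | ht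
  · simp
  · rw [norm_div, div_le_one (norm_pos_iff.mpr ht)]
    exact abs_sin_le_abs

lemma sineIntegral_neg (x : ℝ) : sineIntegral (-x) = -sineIntegral x := by
  calc sineIntegral (-x) = ∫ t in (0 : ℝ)..-x, sin (-t) / -t := by
        simp only [sineIntegral, sin_neg, neg_div_neg_eq]
    _ = ∫ t in x..0, sin t / t := by
        rw [integral_comp_neg (fun t => sin t / t), neg_neg, neg_zero]
    _ = -sineIntegral x := integral_symm _ _

lemma integral_sin_mul_div (c x : ℝ) :
    ∫ t in (0 : ℝ)..x, sin (c * t) / t = sineIntegral (c * x) := by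
  rcases eq_or_ne c 0 with rfl | hc
  · simp [sineIntegral]
  have hscale (t : ℝ) : sin (c * t) / t = c * (sin (c * t) / (c * t)) := by
    rcases eq_or_ne t 0 with rfl | ht
    · simp
    · field_simp
  rw [integral_congr fun t _ => hscale t, intervalIntegral.integral_const_mul,
    integral_comp_mul_left (fun u => sin u / u) hc, mul_zero, smul_eq_mul,
    mul_inv_cancel_left₀ hc, sineIntegral]

lemma integral_sin_div_nonneg {a b : ℝ} (ha : 0 ≤ a) (hab : a ≤ b) (hb : b ≤ π) :
    0 ≤ ∫ t in a..b, sin t / t :=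
  integral_nonneg hab fun _ ht =>
    div_nonneg (sin_nonneg_of_nonneg_of_le_pi (ha.trans ht.1) (ht.2.trans hb)) (ha.trans ht.1)

lemma integral_one_div_sq {a b : ℝ} (ha : 0 < a) (hab : a ≤ b) :
    ∫ t in a..b, 1 / t ^ 2 = 1 / a - 1 / b := by
  have hpos : ∀ t ∈ uIcc a b, 0 < t := fun t ht => ha.trans_le (uIcc_of_le hab ▸ ht).1
  rw [integral_eq_sub_of_hasDerivAt (f := fun t => -t⁻¹)]
  · ring
  · intro t ht
    simpa [one_div] using (hasDerivAt_inv (hpos t ht).ne').fun_neg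
  · exact intervalIntegrable_one_div (fun t ht => (pow_pos (hpos t ht) 2).ne') (by fun_prop)

lemma integral_sin_div_eq {a b : ℝ} (ha : 0 < a) (hab : a ≤ b) :
    ∫ t in a..b, sin t / t = cos a / a - cos b / b - ∫ t in a..b, cos t / t ^ 2 := by
  have hpos : ∀ t ∈ uIcc a b, 0 < t := fun t ht => ha.trans_le (uIcc_of_le hab ▸ ht).1
  have hibp := integral_mul_deriv_eq_deriv_mul (u := fun t => t⁻¹) (v := fun t => -cos t)
    (fun t ht => hasDerivAt_inv (hpos t ht).ne')
    (fun t _ => by simpa using (hasDerivAt_cos t).fun_neg)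
    (intervalIntegrable_inv (fun t ht => (pow_pos (hpos t ht) 2).ne') (by fun_prop)).neg
    (continuous_sin.intervalIntegrable a b)
  simp only [div_eq_inv_mul] at hibp ⊢
  rw [hibp]
  simp only [mul_neg, neg_mul, neg_neg]
  ring

lemma abs_integral_cos_div_sq_le {a b : ℝ} (ha : 0 < a) (hab : a ≤ b) :
    |∫ t in a..b, cos t / t ^ 2| ≤ 1 / a - 1 / b := by
  rw [← integral_one_div_sq ha hab, ← Real.norm_eq_abs]
  refine norm_integral_le_of_norm_le hab (Filter.Eventually.of_forall fun t ht => ?_) ?_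
  · rw [norm_div, norm_pow, Real.norm_eq_abs, Real.norm_eq_abs, sq_abs]
    exact div_le_div_of_nonneg_right (abs_cos_le_one t) (sq_nonneg t)
  · exact intervalIntegrable_one_div
      (fun t ht => (pow_pos (ha.trans_le (uIcc_of_le hab ▸ ht).1) 2).ne') (by fun_prop)

lemma abs_integral_sin_div_sub_le {a b : ℝ} (ha : 0 < a) (hab : a ≤ b) :
    |(∫ t in a..b, sin t / t) - cos a / a| ≤ 1 / a := by
  have hb : 0 < b := ha.trans_le hab
  rw [integral_sin_div_eq ha hab]
  calc |cos a / a - cos b / b - (∫ t in a..b, cos t / t ^ 2) - cos a / a|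
      = |cos b / b + ∫ t in a..b, cos t / t ^ 2| := by rw [← abs_neg]; ring_nf
    _ ≤ |cos b / b| + |∫ t in a..b, cos t / t ^ 2| := abs_add_le _ _
    _ ≤ 1 / b + (1 / a - 1 / b) := by
        gcongr
        · rw [abs_div, abs_of_pos hb]
          exact div_le_div_of_nonneg_right (abs_cos_le_one b) hb.le
        · exact abs_integral_cos_div_sq_le ha hab
    _ = 1 / a := by ring

lemma two_div_pi_le_sineIntegral_pi : 2 / π ≤ sineIntegral π := by
  calc 2 / π = ∫ t in (0 : ℝ)..π, sin t / π := by
        rw [intervalIntegral.integral_div, integral_sin, cos_zero, cos_pi]; norm_num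
    _ ≤ sineIntegral π := by
        refine integral_mono_on_of_le_Ioo pi_pos.le
          ((continuous_sin.div_const π).intervalIntegrable _ _) (intervalIntegrable_sin_div _ _)
          fun t ht => ?_
        exact div_le_div_of_nonneg_left (sin_nonneg_of_nonneg_of_le_pi ht.1.le ht.2.le) ht.1 ht.2.le

lemma integral_sin_div_pi_mem_Icc {x : ℝ} (hx : π ≤ x) :
    -(2 / π) ≤ ∫ t in π..x, sin t / t ∧ ∫ t in π..x, sin t / t ≤ 0 := by
  have h := abs_le.mp (abs_integral_sin_div_sub_le pi_pos hx)
  rw [cos_pi, neg_div, sub_neg_eq_add] at h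
  constructor <;> linarith [h.1, h.2, show 2 / π = 1 / π + 1 / π by ring]

lemma sineIntegral_add_integral (x y : ℝ) :
    sineIntegral x + ∫ t in x..y, sin t / t = sineIntegral y :=
  integral_add_adjacent_intervals (intervalIntegrable_sin_div _ _) (intervalIntegrable_sin_div _ _)

lemma sineIntegral_nonneg {x : ℝ} (hx : 0 ≤ x) : 0 ≤ sineIntegral x := by
  rcases le_total x π with hxπ | hπx
  · exact integral_sin_div_nonneg le_rfl hx hxπ
  · rw [← sineIntegral_add_integral π x]
    linarith [two_div_pi_le_sineIntegral_pi, (integral_sin_div_pi_mem_Icc hπx).1]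

lemma sineIntegral_le_sineIntegral_pi (x : ℝ) : sineIntegral x ≤ sineIntegral π := by
  rcases lt_or_ge x 0 with hx | hx
  · have := sineIntegral_nonneg (neg_nonneg.mpr hx.le)
    rw [sineIntegral_neg] at this
    linarith [sineIntegral_nonneg pi_pos.le]
  rcases le_total x π with hxπ | hπx
  · rw [← sineIntegral_add_integral x π]
    linarith [integral_sin_div_nonneg hx hxπ le_rfl]
  · rw [← sineIntegral_add_integral π x]
    linarith [(integral_sin_div_pi_mem_Icc hπx).2]

lemma abs_sineIntegral_le (x : ℝ) : |sineIntegral x| ≤ sineIntegral π := by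
  rcases le_total 0 x with hx | hx
  · rw [abs_of_nonneg (sineIntegral_nonneg hx)]
    exact sineIntegral_le_sineIntegral_pi x
  · have := sineIntegral_nonneg (neg_nonneg.mpr hx)
    rw [sineIntegral_neg] at this
    rw [abs_of_nonpos (by linarith), ← sineIntegral_neg]
    exact sineIntegral_le_sineIntegral_pi _

lemma isGreatest_sineIntegral_pi : IsGreatest (sineIntegral '' Ioi 0) (sineIntegral π) :=
  ⟨⟨π, pi_pos, rfl⟩, by
    rintro _ ⟨x, -, rfl⟩
    exact sineIntegral_le_sineIntegral_pi x⟩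

lemma sin_le_sum_range_taylor {t : ℝ} (ht0 : 0 ≤ t) (ht : t ^ 2 ≤ 20) (m : ℕ) :
    sin t ≤ ∑ k ∈ Finset.range (2 * m + 1), (-1) ^ k * (t ^ (2 * k + 1) / (2 * k + 1)!) := by
  -- Beyond the first term the terms of the sine series decrease once `t ^ 2 ≤ 20`, so the
  -- alternating series bound applies to the tail `∑ (-1) ^ k f (k + 1) = t - sin t`.
  set f : ℕ → ℝ := fun k => t ^ (2 * k + 1) / (2 * k + 1)! with hf
  have hsum : HasSum (fun k => (-1) ^ k * f (k + 1)) (t - sin t) := by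
    have := ((hasSum_nat_add_iff' 1).mpr (hasSum_sin t)).neg
    simp only [Finset.sum_range_one, pow_zero, one_mul, mul_zero, zero_add, pow_one,
      Nat.factorial_one, Nat.cast_one, div_one, neg_sub] at this
    refine this.congr_fun fun k => ?_
    simp only [hf, pow_succ]
    ring
  have hanti : Antitone fun k => f (k + 1) := by
    refine antitone_nat_of_succ_le fun k => ?_
    have hn : t ^ 2 ≤ (2 * ((k : ℝ) + 1) + 2 + 1) * (2 * ((k : ℝ) + 1) + 1 + 1) := by
      nlinarith
    simp only [hf]
    rw [show 2 * (k + 1 + 1) + 1 = (2 * (k + 1) + 1) + 2 by ring, pow_add, Nat.factorial_succ,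
      Nat.factorial_succ, div_le_div_iff₀ (by positivity) (by positivity)]
    push_cast
    nlinarith [mul_le_mul_of_nonneg_left hn (by positivity :
      0 ≤ t ^ (2 * (k + 1) + 1) * ((2 * (k + 1) + 1)! : ℝ))]
  have := hanti.alternating_series_le_tendsto hsum.tendsto_sum_nat m
  rw [Finset.sum_range_succ']
  show sin t ≤ ∑ k ∈ Finset.range (2 * m), (-1) ^ (k + 1) * f (k + 1) + (-1) ^ 0 * f 0
  simp only [pow_succ, mul_neg_one, neg_mul, Finset.sum_neg_distrib, pow_zero, one_mul, hf,
    mul_zero, zero_add, Nat.factorial_one, Nat.cast_one, div_one] at this ⊢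
  linarith

lemma integral_sum_range_taylor (x : ℝ) (n : ℕ) :
    ∫ t in (0 : ℝ)..x, ∑ k ∈ Finset.range n, (-1) ^ k * (t ^ (2 * k) / (2 * k + 1)!) =
      ∑ k ∈ Finset.range n, (-1) ^ k * (x ^ (2 * k + 1) / ((2 * k + 1) * (2 * k + 1)!)) := by
  rw [integral_finsetSum fun k _ => Continuous.intervalIntegrable (by fun_prop) _ _]
  refine Finset.sum_congr rfl fun k _ => ?_
  rw [intervalIntegral.integral_const_mul, intervalIntegral.integral_div, integral_pow,
    zero_pow (by omega), sub_zero, div_div]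
  push_cast
  ring

lemma sineIntegral_le_sum_range_taylor {x : ℝ} (hx0 : 0 ≤ x) (hx : x ^ 2 ≤ 20) (m : ℕ) :
    sineIntegral x ≤ ∑ k ∈ Finset.range (2 * m + 1),
      (-1) ^ k * (x ^ (2 * k + 1) / ((2 * k + 1) * (2 * k + 1)!)) := by
  rw [← integral_sum_range_taylor]
  refine integral_mono_on_of_le_Ioo hx0 (intervalIntegrable_sin_div _ _)
    (Continuous.intervalIntegrable (by fun_prop) _ _) fun t ht => ?_
  rw [div_le_iff₀ ht.1, Finset.sum_mul]
  refine (sin_le_sum_range_taylor ht.1.le (by nlinarith [ht.1, ht.2]) m).trans_eq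
    (Finset.sum_congr rfl fun k _ => ?_)
  ring

lemma sineIntegral_pi_lt : sineIntegral π < 1.85195 := by
  have h := sineIntegral_le_sum_range_taylor pi_pos.le (by nlinarith [pi_lt_four, pi_pos]) 3
  norm_num [Finset.sum_range_succ, Nat.factorial] at h
  have lo : 3.141592 ≤ π := pi_gt_d6.le
  have hi : π ≤ 3.141593 := pi_lt_d6.le
  have h3 := pow_le_pow_left₀ (by norm_num) lo 3
  have h7 := pow_le_pow_left₀ (by norm_num) lo 7
  have h11 := pow_le_pow_left₀ (by norm_num) lo 11
  have h5 := pow_le_pow_left₀ pi_pos.le hi 5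
  have h9 := pow_le_pow_left₀ pi_pos.le hi 9
  have h13 := pow_le_pow_left₀ pi_pos.le hi 13
  norm_num at h3 h7 h11 h5 h9 h13
  linarith

end Real

/-- for every `x ≥ 0` and `c ∈ ℝ`, `|∫₀^x sin(cω)/ω dω| ≤ 2`; more precisely,
the supremum over `x > 0` of the sine integral `Si(x) = ∫₀^x (sin t)/t dt` is strictly less
than `1.85195`, and `|∫₀^x sin(cω)/ω dω|` never exceeds this supremum. -/
theorem sine_integral_bound :
    (∀ x : ℝ, 0 ≤ x → ∀ c : ℝ, |∫ t in (0:ℝ)..x, Real.sin (c * t) / t| ≤ 2) ∧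
    sSup ((fun x : ℝ => ∫ t in (0:ℝ)..x, Real.sin t / t) '' Set.Ioi 0) < 1.85195 ∧
    (∀ x : ℝ, 0 ≤ x → ∀ c : ℝ, |∫ t in (0:ℝ)..x, Real.sin (c * t) / t| ≤
      sSup ((fun x : ℝ => ∫ t in (0:ℝ)..x, Real.sin t / t) '' Set.Ioi 0)) := by
  have hsup : sSup ((fun x : ℝ => ∫ t in (0:ℝ)..x, Real.sin t / t) '' Set.Ioi 0) =
      Real.sineIntegral Real.pi :=
    Real.isGreatest_sineIntegral_pi.csSup_eq
  have hbound (x c : ℝ) :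
      |∫ t in (0:ℝ)..x, Real.sin (c * t) / t| ≤ Real.sineIntegral Real.pi := by
    rw [Real.integral_sin_mul_div]
    exact Real.abs_sineIntegral_le _
  rw [hsup]
  exact ⟨fun x _ c => (hbound x c).trans (Real.sineIntegral_pi_lt.le.trans (by norm_num)),
    Real.sineIntegral_pi_lt, fun x _ c => hbound x c⟩
end
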